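/- arXiv:2505.07156 — 4 statements merged into one kernel-verified Lean document; each statement's English description precedes it below -/
import Mathlib

section
/- Let F = H1 + N where H1 ∈ ℝ^{n×n} is symmetric positive definite and N ∈ ℝ^{n×n} is skew-symmetric. Then F is nonsingular and ‖F⁻¹‖_{H1⁻¹,H1} ≤ 1. -/
open Matrix

/-- The `H`-norm of a vector: `‖u‖_H = (uᵀ H u)^{1/2}`. -/
noncomputable def vnorm {α : Type*} [Fintype α] (H : Matrix α α ℝ) (u : α → ℝ) : ℝ :=
  Real.sqrt (u ⬝ᵥ (H *ᵥ u))

/-- The weighted operator norm `‖M‖_{H1,H2} = sup_{v ≠ 0} ‖M v‖_{H2} / ‖v‖_{H1}`.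
For a square matrix, `‖M‖_H = wnorm H H M`; the spectral norm is `wnorm 1 1 M`. -/
noncomputable def wnorm {α β : Type*} [Fintype α] [Fintype β]
    (H1 : Matrix α α ℝ) (H2 : Matrix β β ℝ) (M : Matrix β α ℝ) : ℝ :=
  sSup {r : ℝ | ∃ v : α → ℝ, v ≠ 0 ∧ r = vnorm H2 (M *ᵥ v) / vnorm H1 v}

/-!
For skew-symmetric `N` the quadratic form of `N` vanishes, so `F = H₁ + N` has the same quadratic
form as `H₁`; in particular `F` has trivial kernel. Writing `F u = H₁ u + N u` and expanding,
`‖F u‖²_{H₁⁻¹} = ‖u‖²_{H₁} + ‖N u‖²_{H₁⁻¹}`, because the cross term is `2 uᵀ N u = 0`.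
Hence `‖u‖_{H₁} ≤ ‖F u‖_{H₁⁻¹}`, which for `u = F⁻¹ v` is the bound on `F⁻¹`.
-/

theorem Matrix.dotProduct_mulVec_self_eq_zero_of_transpose_eq_neg {ι R : Type*} [Fintype ι]
    [CommRing R] [IsAddTorsionFree R] {N : Matrix ι ι R} (hN : Nᵀ = -N) (x : ι → R) :
    x ⬝ᵥ N *ᵥ x = 0 := by
  refine self_eq_neg.mp ?_
  calc x ⬝ᵥ N *ᵥ x = x ⬝ᵥ Nᵀ *ᵥ x := by
        rw [dotProduct_mulVec, ← mulVec_transpose, dotProduct_comm]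
    _ = -(x ⬝ᵥ N *ᵥ x) := by rw [hN, neg_mulVec, dotProduct_neg]

section PosDefAddSkew

variable {ι : Type*} [Fintype ι] {H N : Matrix ι ι ℝ}

theorem Matrix.PosDef.dotProduct_add_mulVec_self_pos (hH : H.PosDef) (hN : Nᵀ = -N)
    {x : ι → ℝ} (hx : x ≠ 0) : 0 < x ⬝ᵥ (H + N) *ᵥ x := by
  rw [add_mulVec, dotProduct_add, dotProduct_mulVec_self_eq_zero_of_transpose_eq_neg hN, add_zero]
  simpa using hH.dotProduct_mulVec_pos hx

theorem Matrix.PosDef.isUnit_det_add_of_transpose_eq_neg [DecidableEq ι] (hH : H.PosDef)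
    (hN : Nᵀ = -N) : IsUnit (H + N).det := by
  refine isUnit_iff_ne_zero.mpr fun hdet => ?_
  obtain ⟨x, hx, hker⟩ := exists_mulVec_eq_zero_iff.mpr hdet
  simpa [hker] using hH.dotProduct_add_mulVec_self_pos hN hx

theorem Matrix.PosDef.dotProduct_inv_mulVec_add_mulVec [DecidableEq ι] (hH : H.PosDef)
    (hN : Nᵀ = -N) (u : ι → ℝ) :
    (H + N) *ᵥ u ⬝ᵥ H⁻¹ *ᵥ ((H + N) *ᵥ u) = u ⬝ᵥ H *ᵥ u + N *ᵥ u ⬝ᵥ H⁻¹ *ᵥ (N *ᵥ u) := by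
  have hHinv : H⁻¹ * H = 1 := nonsing_inv_mul H ((isUnit_iff_isUnit_det H).mp hH.isUnit)
  have hsymm : (H⁻¹)ᵀ = H⁻¹ := by simpa using hH.isHermitian.inv.eq
  have hcancel : H⁻¹ *ᵥ (H *ᵥ u) = u := by rw [mulVec_mulVec, hHinv, one_mulVec]
  have hcancel' : (H *ᵥ u) ᵥ* H⁻¹ = u := by rw [← mulVec_transpose, hsymm, hcancel]
  have hskew := dotProduct_mulVec_self_eq_zero_of_transpose_eq_neg hN u
  rw [add_mulVec, mulVec_add H⁻¹, hcancel, dotProduct_add, add_dotProduct, add_dotProduct,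
    dotProduct_mulVec (H *ᵥ u), hcancel', dotProduct_comm (N *ᵥ u) u, hskew,
    dotProduct_comm (H *ᵥ u)]
  ring

theorem Matrix.PosDef.vnorm_le_vnorm_inv_add_mulVec [DecidableEq ι] (hH : H.PosDef)
    (hN : Nᵀ = -N) (u : ι → ℝ) : vnorm H u ≤ vnorm H⁻¹ ((H + N) *ᵥ u) := by
  refine Real.sqrt_le_sqrt ?_
  rw [hH.dotProduct_inv_mulVec_add_mulVec hN u, le_add_iff_nonneg_right]
  simpa using hH.inv.posSemidef.dotProduct_mulVec_nonneg (N *ᵥ u)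

end PosDefAddSkew

theorem wnorm_le_of_vnorm_le {α β : Type*} [Fintype α] [Fintype β] {H1 : Matrix α α ℝ}
    {H2 : Matrix β β ℝ} {M : Matrix β α ℝ} {c : ℝ} (hc : 0 ≤ c)
    (hM : ∀ v, vnorm H2 (M *ᵥ v) ≤ c * vnorm H1 v) : wnorm H1 H2 M ≤ c := by
  refine Real.sSup_le ?_ hc
  rintro r ⟨v, -, rfl⟩
  exact div_le_of_le_mul₀ (Real.sqrt_nonneg _) hc (hM v)

theorem stmt_2 {n : ℕ} (F H1 N : Matrix (Fin n) (Fin n) ℝ)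
    (hF : F = H1 + N) (hH1 : H1.PosDef) (hN : Nᵀ = -N) :
    IsUnit F.det ∧ wnorm H1⁻¹ H1 F⁻¹ ≤ 1 := by
  subst hF
  have hdet := hH1.isUnit_det_add_of_transpose_eq_neg hN
  refine ⟨hdet, wnorm_le_of_vnorm_le zero_le_one fun v => ?_⟩
  simpa [mulVec_mulVec, mul_nonsing_inv _ hdet] using
    hH1.vnorm_le_vnorm_inv_add_mulVec hN ((H1 + N)⁻¹ *ᵥ v)
end

section
/- In the saddle-point setting, the Schur complement S = B F⁻¹ Bᵀ is nonsingular and ‖S⁻¹‖_{H2⁻¹,H2} ≤ (1 + η)² / C₂². -/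
/-!
For `x ≠ 0` put `w = F⁻¹Bᵀx`. Then `xᵀSx = wᵀFw = ‖w‖²_{H1}`, while `Bᵀx = Fw = H1 w + N w`
gives `‖Bᵀx‖_{H1⁻¹} ≤ (1 + η) ‖w‖_{H1}`. Together with the inf-sup condition this is the
coercivity estimate `C₂² ‖x‖²_{H2} ≤ (1 + η)² xᵀSx`. Coercivity makes `S` nonsingular, and for
`x = S⁻¹v` it gives `C₂² ‖x‖²_{H2} ≤ (1 + η)² xᵀv ≤ (1 + η)² ‖x‖_{H2} ‖v‖_{H2⁻¹}`.
-/

open Matrix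

section HNorm

variable {α : Type*} [Fintype α] {H : Matrix α α ℝ}

theorem vnorm_eq_norm (hH : H.PosSemidef) (u : α → ℝ) :
    vnorm H u = @norm _ (H.toSeminormedAddCommGroup hH).toNorm u := by
  rw [vnorm, @norm_eq_sqrt_re_inner ℝ _ _ (H.toSeminormedAddCommGroup hH)
    (H.toInnerProductSpace hH), RCLike.re_to_real, dotProduct_comm]
  rfl

theorem vnorm_nonneg (u : α → ℝ) : 0 ≤ vnorm H u := Real.sqrt_nonneg _

@[simp]
theorem vnorm_zero : vnorm H 0 = 0 := by simp [vnorm]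

theorem vnorm_sq (hH : H.PosSemidef) (u : α → ℝ) : vnorm H u ^ 2 = u ⬝ᵥ (H *ᵥ u) :=
  Real.sq_sqrt (by simpa using hH.dotProduct_mulVec_nonneg u)

theorem vnorm_pos (hH : H.PosDef) {u : α → ℝ} (hu : u ≠ 0) : 0 < vnorm H u :=
  Real.sqrt_pos.mpr (by simpa using hH.dotProduct_mulVec_pos hu)

theorem vnorm_smul (c : ℝ) (u : α → ℝ) : vnorm H (c • u) = |c| * vnorm H u := by
  rw [vnorm, vnorm, mulVec_smul, dotProduct_smul, smul_dotProduct, smul_eq_mul, smul_eq_mul,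
    ← mul_assoc, ← sq, Real.sqrt_mul (sq_nonneg c), Real.sqrt_sq_eq_abs]

theorem vnorm_add_le (hH : H.PosSemidef) (u v : α → ℝ) :
    vnorm H (u + v) ≤ vnorm H u + vnorm H v := by
  simpa only [vnorm_eq_norm hH] using
    @norm_add_le _ (H.toSeminormedAddCommGroup hH).toSeminormedAddGroup u v

theorem dotProduct_mulVec_le_vnorm_mul_vnorm (hH : H.PosSemidef) (u v : α → ℝ) :
    u ⬝ᵥ (H *ᵥ v) ≤ vnorm H u * vnorm H v := by
  have h := @real_inner_le_norm _ (H.toSeminormedAddCommGroup hH) (H.toInnerProductSpace hH) u v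
  rw [← vnorm_eq_norm hH, ← vnorm_eq_norm hH] at h
  rwa [dotProduct_comm]

theorem continuous_vnorm (H : Matrix α α ℝ) : Continuous (vnorm H) :=
  (continuous_id.dotProduct (continuous_const.matrix_mulVec continuous_id)).sqrt

variable [DecidableEq α]

theorem vnorm_inv_mulVec (hH : IsUnit H.det) (u : α → ℝ) : vnorm H⁻¹ (H *ᵥ u) = vnorm H u := by
  rw [vnorm, vnorm, mulVec_mulVec, nonsing_inv_mul _ hH, one_mulVec, dotProduct_comm]

theorem vnorm_mulVec_inv (hH : IsUnit H.det) (u : α → ℝ) : vnorm H (H⁻¹ *ᵥ u) = vnorm H⁻¹ u := by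
  rw [vnorm, vnorm, mulVec_mulVec, mul_nonsing_inv _ hH, one_mulVec, dotProduct_comm]

theorem dotProduct_le_vnorm_mul_vnorm_inv (hH : H.PosDef) (u v : α → ℝ) :
    u ⬝ᵥ v ≤ vnorm H u * vnorm H⁻¹ v := by
  have hdet : IsUnit H.det := isUnit_iff_ne_zero.mpr hH.det_pos.ne'
  calc u ⬝ᵥ v = u ⬝ᵥ (H *ᵥ (H⁻¹ *ᵥ v)) := by
        rw [mulVec_mulVec, mul_nonsing_inv _ hdet, one_mulVec]
    _ ≤ vnorm H u * vnorm H (H⁻¹ *ᵥ v) :=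
        dotProduct_mulVec_le_vnorm_mul_vnorm hH.posSemidef _ _
    _ = vnorm H u * vnorm H⁻¹ v := by rw [vnorm_mulVec_inv hdet]

end HNorm

theorem exists_le_mul_of_abs_homogeneous {E : Type*} [NormedAddCommGroup E] [NormedSpace ℝ E]
    [ProperSpace E] {p q : E → ℝ} (hp : Continuous p) (hq : Continuous q)
    (hp_smul : ∀ (c : ℝ) v, p (c • v) = |c| * p v) (hq_smul : ∀ (c : ℝ) v, q (c • v) = |c| * q v)
    (hq_pos : ∀ v, v ≠ 0 → 0 < q v) : ∃ K, ∀ v, p v ≤ K * q v := by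
  have hq_sphere : ∀ v ∈ Metric.sphere (0 : E) 1, q v ≠ 0 := fun v hv =>
    (hq_pos v (ne_zero_of_mem_unit_sphere ⟨v, hv⟩)).ne'
  -- `p / q` is bounded on the compact unit sphere, and both sides scale alike.
  obtain ⟨K, hK⟩ := (isCompact_sphere (0 : E) 1).bddAbove_image
    (hp.continuousOn.div hq.continuousOn hq_sphere)
  refine ⟨K, fun v => ?_⟩
  rcases eq_or_ne v 0 with rfl | hv
  · have hp0 : p 0 = 0 := by simpa using hp_smul 0 0
    have hq0 : q 0 = 0 := by simpa using hq_smul 0 0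
    simp [hp0, hq0]
  set u := ‖v‖⁻¹ • v
  have hu : u ∈ Metric.sphere (0 : E) 1 := by simp [u, norm_smul, hv]
  have hvu : v = ‖v‖ • u := by simp [u, smul_smul, hv]
  have hKu : p u ≤ K * q u :=
    (div_le_iff₀ (hq_pos u (ne_zero_of_mem_unit_sphere ⟨u, hu⟩))).mp (hK ⟨u, hu, rfl⟩)
  rw [hvu, hp_smul, hq_smul, abs_norm, mul_left_comm]
  exact mul_le_mul_of_nonneg_left hKu (norm_nonneg v)

section WeightedNorm

variable {α β : Type*} [Fintype α] [Fintype β] {H1 : Matrix α α ℝ}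

theorem exists_vnorm_mulVec_le (hH1 : H1.PosDef) (H2 : Matrix β β ℝ) (M : Matrix β α ℝ) :
    ∃ K, ∀ v, vnorm H2 (M *ᵥ v) ≤ K * vnorm H1 v :=
  exists_le_mul_of_abs_homogeneous
    ((continuous_vnorm H2).comp M.mulVecLin.continuous_of_finiteDimensional) (continuous_vnorm H1)
    (fun c v => by simp only [mulVec_smul, vnorm_smul]) vnorm_smul (fun _ hv => vnorm_pos hH1 hv)

variable {H2 : Matrix β β ℝ} {M : Matrix β α ℝ} {c : ℝ}

theorem vnorm_mulVec_le_of_wnorm_le (hH1 : H1.PosDef) (hM : wnorm H1 H2 M ≤ c) (v : α → ℝ) :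
    vnorm H2 (M *ᵥ v) ≤ c * vnorm H1 v := by
  rcases eq_or_ne v 0 with rfl | hv
  · simp
  -- `wnorm` is an `sSup`, which says nothing about the ratios until they are bounded above.
  obtain ⟨K, hK⟩ := exists_vnorm_mulVec_le hH1 H2 M
  have hbdd : BddAbove {r : ℝ | ∃ v : α → ℝ, v ≠ 0 ∧ r = vnorm H2 (M *ᵥ v) / vnorm H1 v} := by
    refine ⟨K, ?_⟩
    rintro r ⟨w, hw, rfl⟩
    exact (div_le_iff₀ (vnorm_pos hH1 hw)).mpr (hK w)
  have hle : vnorm H2 (M *ᵥ v) / vnorm H1 v ≤ c := (le_csSup hbdd ⟨v, hv, rfl⟩).trans hM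
  rwa [div_le_iff₀ (vnorm_pos hH1 hv)] at hle

theorem wnorm_le_of_forall_vnorm_le (hc : 0 ≤ c) (h : ∀ v, vnorm H2 (M *ᵥ v) ≤ c * vnorm H1 v) :
    wnorm H1 H2 M ≤ c :=
  Real.sSup_le (by rintro r ⟨v, -, rfl⟩; exact div_le_of_le_mul₀ (vnorm_nonneg v) hc (h v)) hc

end WeightedNorm

section Coercive

variable {β : Type*} [Fintype β] [DecidableEq β] {H S : Matrix β β ℝ} {a b : ℝ}

theorem isUnit_det_of_coercive (hH : H.PosDef) (ha : 0 < a)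
    (hS : ∀ x, x ≠ 0 → a * vnorm H x ^ 2 ≤ b * (x ⬝ᵥ (S *ᵥ x))) : IsUnit S.det := by
  refine isUnit_iff_ne_zero.mpr fun h0 => ?_
  obtain ⟨x, hx, hSx⟩ := exists_mulVec_eq_zero_iff.mpr h0
  have := hS x hx
  rw [hSx, dotProduct_zero, mul_zero] at this
  exact (mul_pos ha (pow_pos (vnorm_pos hH hx) 2)).not_ge this

theorem wnorm_inv_le_of_coercive (hH : H.PosDef) (ha : 0 < a) (hb : 0 ≤ b)
    (hS : ∀ x, x ≠ 0 → a * vnorm H x ^ 2 ≤ b * (x ⬝ᵥ (S *ᵥ x))) : wnorm H⁻¹ H S⁻¹ ≤ b / a := by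
  refine wnorm_le_of_forall_vnorm_le (div_nonneg hb ha.le) fun v => ?_
  set x := S⁻¹ *ᵥ v
  rcases eq_or_ne x 0 with hx | hx
  · rw [hx, vnorm_zero]
    exact mul_nonneg (div_nonneg hb ha.le) (vnorm_nonneg v)
  have hSx : S *ᵥ x = v := by
    rw [mulVec_mulVec, mul_nonsing_inv _ (isUnit_det_of_coercive hH ha hS), one_mulVec]
  have hxpos := vnorm_pos hH hx
  have key : a * vnorm H x * vnorm H x ≤ b * vnorm H⁻¹ v * vnorm H x := by
    calc a * vnorm H x * vnorm H x = a * vnorm H x ^ 2 := by ring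
      _ ≤ b * (x ⬝ᵥ v) := hSx ▸ hS x hx
      _ ≤ b * (vnorm H x * vnorm H⁻¹ v) :=
          mul_le_mul_of_nonneg_left (dotProduct_le_vnorm_mul_vnorm_inv hH x v) hb
      _ = b * vnorm H⁻¹ v * vnorm H x := by ring
  rw [div_mul_eq_mul_div, le_div_iff₀ ha, mul_comm]
  exact le_of_mul_le_mul_right key hxpos

end Coercive

section SaddlePoint

variable {α β : Type*} [Fintype α] [Fintype β] {F H1 N : Matrix α α ℝ} {η C : ℝ}

theorem dotProduct_symmPart_mulVec (F : Matrix α α ℝ) (z : α → ℝ) :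
    z ⬝ᵥ ((((1 : ℝ) / 2) • (F + Fᵀ)) *ᵥ z) = z ⬝ᵥ (F *ᵥ z) := by
  have hT : z ⬝ᵥ (Fᵀ *ᵥ z) = z ⬝ᵥ (F *ᵥ z) := by
    rw [dotProduct_mulVec, vecMul_transpose, dotProduct_comm]
  simp only [smul_mulVec, add_mulVec, dotProduct_smul, dotProduct_add, hT, smul_eq_mul]
  ring

variable [DecidableEq α]

theorem isUnit_det_of_posDef_symmPart (hF : (((1 : ℝ) / 2) • (F + Fᵀ)).PosDef) :
    IsUnit F.det := by
  refine isUnit_iff_ne_zero.mpr fun h0 => ?_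
  obtain ⟨z, hz, hFz⟩ := exists_mulVec_eq_zero_iff.mpr h0
  have := hF.dotProduct_mulVec_pos hz
  rw [star_trivial, dotProduct_symmPart_mulVec, hFz, dotProduct_zero] at this
  exact this.false

theorem vnorm_inv_add_mulVec_le (hH1 : H1.PosDef) (hN : wnorm H1 H1⁻¹ N ≤ η) (w : α → ℝ) :
    vnorm H1⁻¹ ((H1 + N) *ᵥ w) ≤ (1 + η) * vnorm H1 w := by
  have hdet : IsUnit H1.det := isUnit_iff_ne_zero.mpr hH1.det_pos.ne'
  calc vnorm H1⁻¹ ((H1 + N) *ᵥ w)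
      ≤ vnorm H1⁻¹ (H1 *ᵥ w) + vnorm H1⁻¹ (N *ᵥ w) := by
        rw [add_mulVec]; exact vnorm_add_le hH1.inv.posSemidef _ _
    _ ≤ vnorm H1 w + η * vnorm H1 w := by
        rw [vnorm_inv_mulVec hdet]
        exact add_le_add le_rfl (vnorm_mulVec_le_of_wnorm_le hH1 hN w)
    _ = (1 + η) * vnorm H1 w := by ring

theorem sq_mul_vnorm_sq_le_dotProduct_schur {B : Matrix β α ℝ} {H2 : Matrix β β ℝ}
    (hH1 : H1 = ((1 : ℝ) / 2) • (F + Fᵀ)) (hH1pd : H1.PosDef) (hFHN : F = H1 + N)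
    (hN : wnorm H1 H1⁻¹ N ≤ η) (hC : 0 ≤ C) {x : β → ℝ}
    (hx : C * vnorm H2 x ≤ vnorm H1⁻¹ (Bᵀ *ᵥ x)) :
    C ^ 2 * vnorm H2 x ^ 2 ≤ (1 + η) ^ 2 * (x ⬝ᵥ ((B * F⁻¹ * Bᵀ) *ᵥ x)) := by
  have hF : IsUnit F.det := isUnit_det_of_posDef_symmPart (hH1 ▸ hH1pd)
  set w := F⁻¹ *ᵥ Bᵀ *ᵥ x
  have hFw : F *ᵥ w = Bᵀ *ᵥ x := by rw [mulVec_mulVec, mul_nonsing_inv _ hF, one_mulVec]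
  have hschur : x ⬝ᵥ ((B * F⁻¹ * Bᵀ) *ᵥ x) = w ⬝ᵥ (F *ᵥ w) := by
    calc x ⬝ᵥ ((B * F⁻¹ * Bᵀ) *ᵥ x) = (Bᵀ *ᵥ x) ⬝ᵥ w := by
          rw [← mulVec_mulVec, ← mulVec_mulVec, dotProduct_mulVec, ← mulVec_transpose]
      _ = w ⬝ᵥ (F *ᵥ w) := by rw [← hFw, dotProduct_comm]
  have hbound : C * vnorm H2 x ≤ (1 + η) * vnorm H1 w := by
    calc C * vnorm H2 x ≤ vnorm H1⁻¹ (F *ᵥ w) := hFw ▸ hx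
      _ ≤ (1 + η) * vnorm H1 w := hFHN ▸ vnorm_inv_add_mulVec_le hH1pd hN w
  calc C ^ 2 * vnorm H2 x ^ 2 = (C * vnorm H2 x) ^ 2 := by ring
    _ ≤ ((1 + η) * vnorm H1 w) ^ 2 := pow_le_pow_left₀ (mul_nonneg hC (vnorm_nonneg x)) hbound 2
    _ = (1 + η) ^ 2 * (w ⬝ᵥ (H1 *ᵥ w)) := by rw [mul_pow, vnorm_sq hH1pd.posSemidef]
    _ = (1 + η) ^ 2 * (x ⬝ᵥ ((B * F⁻¹ * Bᵀ) *ᵥ x)) := by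
        rw [hH1, dotProduct_symmPart_mulVec, hschur]

end SaddlePoint

theorem stmt_4_general
    {n m : ℕ} (F : Matrix (Fin n) (Fin n) ℝ) (B : Matrix (Fin m) (Fin n) ℝ)
    (H1 N : Matrix (Fin n) (Fin n) ℝ) (H2 : Matrix (Fin m) (Fin m) ℝ)
    (η C₂ : ℝ) (hC2 : 0 < C₂)
    (hH1 : H1 = ((1 : ℝ)/2) • (F + Fᵀ)) (hN : N = ((1 : ℝ)/2) • (F - Fᵀ))
    (hH1pd : H1.PosDef) (hH2pd : H2.PosDef)
    (hNnorm : wnorm H1 H1⁻¹ N ≤ η)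
    (hinfsup : ∀ x : Fin m → ℝ, x ≠ 0 → C₂ * vnorm H2 x ≤ vnorm H1⁻¹ (Bᵀ *ᵥ x)) :
    IsUnit (B * F⁻¹ * Bᵀ).det ∧
    wnorm H2⁻¹ H2 (B * F⁻¹ * Bᵀ)⁻¹ ≤ (1 + η) ^ 2 / C₂ ^ 2 := by
  have hFHN : F = H1 + N := by
    rw [hH1, hN, ← smul_add, add_add_sub_cancel, ← two_smul ℝ F, smul_smul]
    norm_num
  have hcoercive : ∀ x, x ≠ 0 →
      C₂ ^ 2 * vnorm H2 x ^ 2 ≤ (1 + η) ^ 2 * (x ⬝ᵥ ((B * F⁻¹ * Bᵀ) *ᵥ x)) := fun x hx =>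
    sq_mul_vnorm_sq_le_dotProduct_schur hH1 hH1pd hFHN hNnorm hC2.le (hinfsup x hx)
  exact ⟨isUnit_det_of_coercive hH2pd (by positivity) hcoercive,
    wnorm_inv_le_of_coercive hH2pd (by positivity) (sq_nonneg _) hcoercive⟩

theorem stmt_4
    {n m : ℕ} (F : Matrix (Fin n) (Fin n) ℝ) (B : Matrix (Fin m) (Fin n) ℝ)
    (H1 N : Matrix (Fin n) (Fin n) ℝ) (H2 : Matrix (Fin m) (Fin m) ℝ)
    (η C₁ C₂ : ℝ) (hη : 0 < η) (hC1 : 0 < C₁) (hC2 : 0 < C₂)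
    (hH1 : H1 = ((1 : ℝ)/2) • (F + Fᵀ)) (hN : N = ((1 : ℝ)/2) • (F - Fᵀ))
    (hH1pd : H1.PosDef) (hH2pd : H2.PosDef)
    (hBrank : B.rank = m)
    (hNnorm : wnorm H1 H1⁻¹ N ≤ η)
    (hBnorm : wnorm H1 H2⁻¹ B ≤ C₁)
    (hinfsup : ∀ x : Fin m → ℝ, x ≠ 0 → C₂ * vnorm H2 x ≤ vnorm H1⁻¹ (Bᵀ *ᵥ x)) :
    IsUnit (B * F⁻¹ * Bᵀ).det ∧
    wnorm H2⁻¹ H2 (B * F⁻¹ * Bᵀ)⁻¹ ≤ (1 + η) ^ 2 / C₂ ^ 2 :=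
  stmt_4_general F B H1 N H2 η C₂ hC2 hH1 hN hH1pd hH2pd hNnorm hinfsup
end

section
/- In the saddle-point setting, with M_U = [[F, Bᵀ],[0, H2]] and H = blockdiag(H1, H2), if η < 1/2 then ‖H(M_U⁻¹K) − (M_U⁻¹K)ᵀH‖_{H,H⁻¹} ≤ (2C₁² + 4C₁) η. -/
open Matrix

/-!
Conjugating by the symmetric square root `R = diag(H1^{1/2}, H2^{1/2})` turns each weighted norm
into a spectral norm and reduces everything to `H1 = I`, `H2 = I`, `F = I + Ñ` with `Ñ` skew,
`‖Ñ‖ ≤ η`, `‖B̃‖ ≤ C₁`. There `Q = M_U⁻¹K = [[I - F⁻¹B̃ᵀB̃, F⁻¹B̃ᵀ], [B̃, 0]]`, and with `S = B̃ᵀB̃`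
the blocks of `Q - Qᵀ` are `F⁻¹(ÑS + SÑ)F⁻ᵀ`, `-F⁻¹ÑB̃ᵀ` and the transpose of `F⁻¹ÑB̃ᵀ`.
Skewness gives `‖(I + Ñ)x‖ ≥ ‖x‖`, so `‖F⁻¹‖ ≤ 1`, and the blocks have norms at most
`2ηC₁²`, `ηC₁`, `ηC₁`.
-/

open scoped Matrix.Norms.L2Operator

namespace Matrix

lemma fromBlocks_sub {l m n o : Type*} (A A' : Matrix l n ℝ) (B B' : Matrix l o ℝ)
    (C C' : Matrix m n ℝ) (D D' : Matrix m o ℝ) :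
    fromBlocks A B C D - fromBlocks A' B' C' D'
      = fromBlocks (A - A') (B - B') (C - C') (D - D') := by
  simp only [sub_eq_add_neg, fromBlocks_neg, fromBlocks_add]

variable {l m n o : Type*} [Fintype l] [Fintype m] [Fintype n] [Fintype o]

lemma norm_toLp_sq (v : n → ℝ) : ‖WithLp.toLp 2 v‖ ^ 2 = v ⬝ᵥ v := by
  rw [EuclideanSpace.real_norm_sq_eq]
  simp [dotProduct, sq]

lemma norm_toLp_sumElim_le (x : m → ℝ) (y : n → ℝ) :
    ‖WithLp.toLp 2 (Sum.elim x y)‖ ≤ ‖WithLp.toLp 2 x‖ + ‖WithLp.toLp 2 y‖ := by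
  rw [← pow_le_pow_iff_left₀ (norm_nonneg _) (by positivity) two_ne_zero, norm_toLp_sq,
    sumElim_dotProduct_sumElim, ← norm_toLp_sq, ← norm_toLp_sq]
  nlinarith [norm_nonneg (WithLp.toLp 2 x), norm_nonneg (WithLp.toLp 2 y)]

lemma l2_opNorm_le_of_forall [DecidableEq n] {A : Matrix m n ℝ} {c : ℝ} (hc : 0 ≤ c)
    (h : ∀ v : n → ℝ, ‖WithLp.toLp 2 (A *ᵥ v)‖ ≤ c * ‖WithLp.toLp 2 v‖) : ‖A‖ ≤ c := by
  rw [l2_opNorm_def]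
  exact ContinuousLinearMap.opNorm_le_bound _ hc fun v => h v.ofLp

lemma norm_toLp_mulVec_le [DecidableEq n] (A : Matrix m n ℝ) (v : n → ℝ) :
    ‖WithLp.toLp 2 (A *ᵥ v)‖ ≤ ‖A‖ * ‖WithLp.toLp 2 v‖ :=
  A.l2_opNorm_mulVec (WithLp.toLp 2 v)

lemma l2_opNorm_transpose [DecidableEq m] [DecidableEq n] (A : Matrix m n ℝ) : ‖Aᵀ‖ = ‖A‖ := by
  rw [← conjTranspose_eq_transpose_of_trivial, l2_opNorm_conjTranspose]

lemma l2_opNorm_fromRows_le [DecidableEq n] (A : Matrix l n ℝ) (B : Matrix m n ℝ) :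
    ‖fromRows A B‖ ≤ ‖A‖ + ‖B‖ :=
  l2_opNorm_le_of_forall (by positivity) fun v => by
    rw [fromRows_mulVec, add_mul]
    exact (norm_toLp_sumElim_le _ _).trans
      (add_le_add (A.norm_toLp_mulVec_le v) (B.norm_toLp_mulVec_le v))

lemma l2_opNorm_fromCols_le [DecidableEq m] [DecidableEq n] [DecidableEq o]
    (A : Matrix m n ℝ) (B : Matrix m o ℝ) : ‖fromCols A B‖ ≤ ‖A‖ + ‖B‖ := by
  rw [← l2_opNorm_transpose, transpose_fromCols, ← l2_opNorm_transpose A, ← l2_opNorm_transpose B]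
  exact l2_opNorm_fromRows_le _ _

lemma l2_opNorm_fromBlocks_le [DecidableEq l] [DecidableEq m] [DecidableEq n] [DecidableEq o]
    (A : Matrix l n ℝ) (B : Matrix l o ℝ) (C : Matrix m n ℝ) (D : Matrix m o ℝ) :
    ‖fromBlocks A B C D‖ ≤ ‖A‖ + ‖B‖ + ‖C‖ + ‖D‖ := by
  rw [← fromRows_fromCols_eq_fromBlocks]
  linarith [l2_opNorm_fromRows_le (fromCols A B) (fromCols C D), l2_opNorm_fromCols_le A B,
    l2_opNorm_fromCols_le C D]

lemma dotProduct_mulVec_self_eq_zero {S : Matrix n n ℝ} (hS : Sᵀ = -S) (x : n → ℝ) :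
    x ⬝ᵥ (S *ᵥ x) = 0 := by
  have h : x ⬝ᵥ (S *ᵥ x) = -(x ⬝ᵥ (S *ᵥ x)) := by
    conv_lhs => rw [dotProduct_mulVec, ← mulVec_transpose, hS, dotProduct_comm]
    rw [neg_mulVec, dotProduct_neg]
  linarith

lemma norm_toLp_le_norm_one_add_mulVec [DecidableEq n] {S : Matrix n n ℝ} (hS : Sᵀ = -S)
    (x : n → ℝ) :
    ‖WithLp.toLp 2 x‖ ≤ ‖WithLp.toLp 2 ((1 + S) *ᵥ x)‖ := by
  rw [← pow_le_pow_iff_left₀ (norm_nonneg _) (norm_nonneg _) two_ne_zero, norm_toLp_sq,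
    norm_toLp_sq, add_mulVec, one_mulVec, dotProduct_add, add_dotProduct, add_dotProduct,
    dotProduct_mulVec_self_eq_zero hS, dotProduct_comm (S *ᵥ x), dotProduct_mulVec_self_eq_zero hS]
  linarith [norm_toLp_sq (S *ᵥ x), sq_nonneg ‖WithLp.toLp 2 (S *ᵥ x)‖]

lemma isUnit_det_one_add_of_transpose_eq_neg [DecidableEq n] {S : Matrix n n ℝ} (hS : Sᵀ = -S) :
    IsUnit (1 + S).det := by
  refine isUnit_iff_ne_zero.2 fun h0 => ?_
  obtain ⟨v, hv, hSv⟩ := exists_mulVec_eq_zero_iff.2 h0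
  have h := norm_toLp_le_norm_one_add_mulVec hS v
  rw [hSv, WithLp.toLp_zero, norm_zero, norm_le_zero_iff] at h
  exact hv (congrArg WithLp.ofLp h)

lemma l2_opNorm_inv_one_add_le [DecidableEq n] {S : Matrix n n ℝ} (hS : Sᵀ = -S) :
    ‖(1 + S)⁻¹‖ ≤ 1 :=
  l2_opNorm_le_of_forall zero_le_one fun v => by
    have h := norm_toLp_le_norm_one_add_mulVec hS ((1 + S)⁻¹ *ᵥ v)
    rwa [mulVec_mulVec, mul_nonsing_inv _ (isUnit_det_one_add_of_transpose_eq_neg hS), one_mulVec,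
      ← one_mul ‖WithLp.toLp 2 v‖] at h

lemma fromBlocks_diag_mul_fromBlocks_mul_fromBlocks_diag (P P' : Matrix l l ℝ)
    (Q Q' : Matrix m m ℝ) (A : Matrix l l ℝ) (B : Matrix l m ℝ) (C : Matrix m l ℝ)
    (D : Matrix m m ℝ) :
    fromBlocks P 0 0 Q * fromBlocks A B C D * fromBlocks P' 0 0 Q'
      = fromBlocks (P * A * P') (P * B * Q') (Q * C * P') (Q * D * Q') := by
  simp [fromBlocks_multiply]

lemma inv_fromBlocks_diag [DecidableEq l] [DecidableEq m] {P : Matrix l l ℝ} {Q : Matrix m m ℝ}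
    (hP : IsUnit P.det) (hQ : IsUnit Q.det) :
    (fromBlocks P 0 0 Q)⁻¹ = fromBlocks P⁻¹ 0 0 Q⁻¹ := by
  rw [inv_fromBlocks_zero₂₁_of_isUnit_iff _ _ _
    (iff_of_true ((isUnit_iff_isUnit_det _).2 hP) ((isUnit_iff_isUnit_det _).2 hQ))]
  simp

lemma mul_inv_mul_mul_inv [DecidableEq n] {R : Matrix n n ℝ} (hR : IsUnit R.det)
    (A B : Matrix n n ℝ) :
    R * (A⁻¹ * B) * R⁻¹ = (R⁻¹ * A * R⁻¹)⁻¹ * (R⁻¹ * B * R⁻¹) := by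
  rw [Matrix.mul_inv_rev, Matrix.mul_inv_rev, nonsing_inv_nonsing_inv _ hR]
  simp only [Matrix.mul_assoc, mul_nonsing_inv_cancel_left _ _ hR]

lemma transpose_mul_mul_eq_neg {P S : Matrix n n ℝ} (hP : Pᵀ = P) (hS : Sᵀ = -S) :
    (P * S * P)ᵀ = -(P * S * P) := by
  rw [transpose_mul, transpose_mul, hP, hS, Matrix.neg_mul, Matrix.mul_neg, Matrix.mul_assoc]

structure IsSymmSqrt [DecidableEq n] (R H : Matrix n n ℝ) : Prop where
  transpose_eq : Rᵀ = R
  mul_self : R * R = H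
  isUnit_det : IsUnit R.det

lemma PosDef.exists_isSymmSqrt [DecidableEq n] {H : Matrix n n ℝ} (hH : H.PosDef) :
    ∃ R, IsSymmSqrt R H := by
  open scoped MatrixOrder in
  have hR := CFC.sqrt_mul_sqrt_self H hH.posSemidef.nonneg
  refine ⟨CFC.sqrt H, (CFC.sqrt_nonneg H).posSemidef.1.eq, hR,
    isUnit_iff_ne_zero.2 fun h0 => hH.det_pos.ne' ?_⟩
  rw [← hR, det_mul, h0, mul_zero]

namespace IsSymmSqrt

variable [DecidableEq m] [DecidableEq n] {R H : Matrix n n ℝ}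

lemma transpose_mul_self (hR : IsSymmSqrt R H) : Rᵀ * R = H := by
  rw [hR.transpose_eq, hR.mul_self]

lemma transpose_inv (hR : IsSymmSqrt R H) : (R⁻¹)ᵀ = R⁻¹ := by
  rw [transpose_nonsing_inv, hR.transpose_eq]

lemma inv_transpose_mul_inv (hR : IsSymmSqrt R H) : (R⁻¹)ᵀ * R⁻¹ = H⁻¹ := by
  rw [hR.transpose_inv, ← Matrix.mul_inv_rev, hR.mul_self]

lemma inv_mul_mul_inv (hR : IsSymmSqrt R H) : R⁻¹ * H * R⁻¹ = 1 := by
  rw [← hR.mul_self, nonsing_inv_mul_cancel_left _ _ hR.isUnit_det,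
    mul_nonsing_inv _ hR.isUnit_det]

lemma fromBlocks {R₁ H₁ : Matrix n n ℝ} {R₂ H₂ : Matrix m m ℝ}
    (h₁ : IsSymmSqrt R₁ H₁) (h₂ : IsSymmSqrt R₂ H₂) :
    IsSymmSqrt (fromBlocks R₁ 0 0 R₂) (fromBlocks H₁ 0 0 H₂) where
  transpose_eq := by
    simp only [fromBlocks_transpose, h₁.transpose_eq, h₂.transpose_eq, transpose_zero]
  mul_self := by simp [fromBlocks_multiply, h₁.mul_self, h₂.mul_self]
  isUnit_det := by
    rw [det_fromBlocks_zero₂₁]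
    exact h₁.isUnit_det.mul h₂.isUnit_det

lemma inv_mul_sub_transpose_mul_mul_inv (hR : IsSymmSqrt R H) (X : Matrix n n ℝ) :
    R⁻¹ * (H * X - Xᵀ * H) * R⁻¹ = R * X * R⁻¹ - (R * X * R⁻¹)ᵀ := by
  have h := hR.isUnit_det
  rw [← hR.mul_self, transpose_mul, transpose_mul, hR.transpose_inv, hR.transpose_eq,
    Matrix.mul_sub, Matrix.sub_mul]
  simp only [Matrix.mul_assoc, nonsing_inv_mul_cancel_left _ _ h, mul_nonsing_inv _ h,
    Matrix.mul_one]

lemma inv_fromBlocks_mul_fromBlocks_mul_inv {R₁ H₁ : Matrix n n ℝ} {R₂ H₂ : Matrix m m ℝ}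
    (h₁ : IsSymmSqrt R₁ H₁) (h₂ : IsSymmSqrt R₂ H₂) (N : Matrix n n ℝ) (B C : Matrix m n ℝ)
    (D : Matrix m m ℝ) :
    (Matrix.fromBlocks R₁ 0 0 R₂)⁻¹ * Matrix.fromBlocks (H₁ + N) Bᵀ C D
        * (Matrix.fromBlocks R₁ 0 0 R₂)⁻¹
      = Matrix.fromBlocks (1 + R₁⁻¹ * N * R₁⁻¹) (R₂⁻¹ * B * R₁⁻¹)ᵀ (R₂⁻¹ * C * R₁⁻¹)
          (R₂⁻¹ * D * R₂⁻¹) := by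
  rw [inv_fromBlocks_diag h₁.isUnit_det h₂.isUnit_det,
    fromBlocks_diag_mul_fromBlocks_mul_fromBlocks_diag, Matrix.mul_add, Matrix.add_mul,
    h₁.inv_mul_mul_inv, transpose_mul, transpose_mul, h₁.transpose_inv, h₂.transpose_inv,
    Matrix.mul_assoc R₁⁻¹ Bᵀ]

end IsSymmSqrt

end Matrix

section WeightedNorm

variable {α β : Type*} [Fintype α] [Fintype β]

lemma vnorm_eq_norm_mulVec {P R : Matrix α α ℝ} (hR : Rᵀ * R = P) (u : α → ℝ) :
    vnorm P u = ‖WithLp.toLp 2 (R *ᵥ u)‖ := by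
  rw [vnorm, ← hR, ← mulVec_mulVec, dotProduct_mulVec, vecMul_transpose, ← norm_toLp_sq,
    Real.sqrt_sq (norm_nonneg _)]

lemma wnorm_eq_l2_opNorm [DecidableEq α] {Ha Ra : Matrix α α ℝ} {Hb Rb : Matrix β β ℝ}
    (hRa : Raᵀ * Ra = Ha) (hRa_det : IsUnit Ra.det) (hRb : Rbᵀ * Rb = Hb) (M : Matrix β α ℝ) :
    wnorm Ha Hb M = ‖Rb * M * Ra⁻¹‖ := by
  set A := Rb * M * Ra⁻¹
  have hA : ∀ v, vnorm Hb (M *ᵥ v) = ‖WithLp.toLp 2 (A *ᵥ (Ra *ᵥ v))‖ := fun v => by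
    rw [vnorm_eq_norm_mulVec hRb, mulVec_mulVec, mulVec_mulVec, Matrix.mul_assoc,
      nonsing_inv_mul _ hRa_det, Matrix.mul_one]
  have hratio_le : ∀ v, vnorm Hb (M *ᵥ v) / vnorm Ha v ≤ ‖A‖ := fun v => by
    rw [hA, vnorm_eq_norm_mulVec hRa]
    exact div_le_of_le_mul₀ (norm_nonneg _) (norm_nonneg _) (A.norm_toLp_mulVec_le _)
  apply le_antisymm
  · exact Real.sSup_le (by rintro _ ⟨v, -, rfl⟩; exact hratio_le v) (norm_nonneg _)
  · refine l2_opNorm_le_of_forall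
      (Real.sSup_nonneg (by rintro _ ⟨v, -, rfl⟩; unfold vnorm; positivity)) fun w => ?_
    rcases eq_or_ne w 0 with rfl | hw
    · simp
    have hRv : Ra *ᵥ (Ra⁻¹ *ᵥ w) = w := by
      rw [mulVec_mulVec, mul_nonsing_inv _ hRa_det, one_mulVec]
    have hw' : 0 < ‖WithLp.toLp 2 w‖ := norm_pos_iff.2 (by simpa using hw)
    rw [← div_le_iff₀ hw']
    refine le_csSup ⟨‖A‖, by rintro _ ⟨v, -, rfl⟩; exact hratio_le v⟩
      ⟨Ra⁻¹ *ᵥ w, fun h => hw (by rw [← hRv, h, mulVec_zero]), ?_⟩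
    rw [hA, vnorm_eq_norm_mulVec hRa, hRv]

end WeightedNorm

namespace Matrix

variable {m n : Type*} [Fintype m] [Fintype n] [DecidableEq m] [DecidableEq n]

lemma inv_fromBlocks_mul_fromBlocks {F : Matrix n n ℝ} (hF : IsUnit F.det) (C : Matrix n m ℝ)
    (B : Matrix m n ℝ) :
    (fromBlocks F C 0 1)⁻¹ * fromBlocks F C B 0 = fromBlocks (1 - F⁻¹ * C * B) (F⁻¹ * C) B 0 := by
  rw [inv_fromBlocks_zero₂₁_of_isUnit_iff _ _ _
    (iff_of_true ((isUnit_iff_isUnit_det F).2 hF) isUnit_one), fromBlocks_multiply]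
  simp [nonsing_inv_mul _ hF, sub_eq_add_neg, Matrix.mul_assoc]

lemma saddle_sub_transpose_eq {N : Matrix n n ℝ} (hN : Nᵀ = -N) (B : Matrix m n ℝ) :
    (fromBlocks (1 + N) Bᵀ 0 1)⁻¹ * fromBlocks (1 + N) Bᵀ B 0
        - ((fromBlocks (1 + N) Bᵀ 0 1)⁻¹ * fromBlocks (1 + N) Bᵀ B 0)ᵀ
      = fromBlocks ((1 + N)⁻¹ * (N * (Bᵀ * B) + Bᵀ * B * N) * ((1 + N)⁻¹)ᵀ)
          (-((1 + N)⁻¹ * (N * Bᵀ))) ((1 + N)⁻¹ * (N * Bᵀ))ᵀ 0 := by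
  have hF := isUnit_det_one_add_of_transpose_eq_neg hN
  set G := (1 + N)⁻¹
  set S := Bᵀ * B
  have hGF : G * (1 + N) = 1 := nonsing_inv_mul _ hF
  have hGFt : (1 - N) * Gᵀ = 1 := by
    rw [sub_eq_add_neg, ← hN, ← transpose_one, ← transpose_add, ← transpose_mul, hGF,
      transpose_one]
  have h11 : (1 - G * Bᵀ * B) - (1 - G * Bᵀ * B)ᵀ = G * (N * S + S * N) * Gᵀ :=
    calc (1 - G * Bᵀ * B) - (1 - G * Bᵀ * B)ᵀ = S * Gᵀ - G * S := by
          rw [Matrix.mul_assoc, transpose_sub, transpose_one, transpose_mul,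
            show Sᵀ = S by simp [S]]
          abel
      _ = (G * (1 + N)) * S * Gᵀ - G * S * ((1 - N) * Gᵀ) := by rw [hGF, hGFt]; noncomm_ring
      _ = G * (N * S + S * N) * Gᵀ := by noncomm_ring
  have h12 : G * Bᵀ - Bᵀ = -(G * (N * Bᵀ)) := by
    have hG1 : G - 1 = -(G * N) :=
      calc G - 1 = G - G * (1 + N) := by rw [hGF]
        _ = -(G * N) := by noncomm_ring
    simpa [Matrix.sub_mul, Matrix.neg_mul, Matrix.mul_assoc] using congrArg (· * Bᵀ) hG1
  have h21 : B - (G * Bᵀ)ᵀ = (G * (N * Bᵀ))ᵀ := by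
    have h := congrArg transpose h12
    rw [transpose_sub, transpose_neg, transpose_transpose] at h
    rw [← neg_sub, h, neg_neg]
  rw [inv_fromBlocks_mul_fromBlocks hF, fromBlocks_transpose, fromBlocks_sub, h11, h12, h21,
    transpose_zero, sub_zero]

lemma l2_opNorm_saddle_sub_transpose_le {N : Matrix n n ℝ} (hN : Nᵀ = -N) (B : Matrix m n ℝ) :
    ‖(fromBlocks (1 + N) Bᵀ 0 1)⁻¹ * fromBlocks (1 + N) Bᵀ B 0
        - ((fromBlocks (1 + N) Bᵀ 0 1)⁻¹ * fromBlocks (1 + N) Bᵀ B 0)ᵀ‖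
      ≤ 2 * ‖N‖ * (‖B‖ ^ 2 + ‖B‖) := by
  have hG : ‖(1 + N)⁻¹‖ ≤ 1 := l2_opNorm_inv_one_add_le hN
  have hS : ‖Bᵀ * B‖ = ‖B‖ ^ 2 := by
    rw [sq, ← l2_opNorm_conjTranspose_mul_self, conjTranspose_eq_transpose_of_trivial]
  have h12 : ‖(1 + N)⁻¹ * (N * Bᵀ)‖ ≤ ‖N‖ * ‖B‖ :=
    calc ‖(1 + N)⁻¹ * (N * Bᵀ)‖ ≤ ‖(1 + N)⁻¹‖ * (‖N‖ * ‖Bᵀ‖) :=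
          (l2_opNorm_mul _ _).trans (by gcongr; exact l2_opNorm_mul _ _)
      _ ≤ ‖N‖ * ‖B‖ := by
          rw [l2_opNorm_transpose]
          exact mul_le_of_le_one_left (by positivity) hG
  have h11 : ‖(1 + N)⁻¹ * (N * (Bᵀ * B) + Bᵀ * B * N) * ((1 + N)⁻¹)ᵀ‖ ≤ 2 * ‖N‖ * ‖B‖ ^ 2 :=
    calc _ ≤ ‖(1 + N)⁻¹‖ * (‖N‖ * ‖Bᵀ * B‖ + ‖Bᵀ * B‖ * ‖N‖) * ‖((1 + N)⁻¹)ᵀ‖ := by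
          refine (l2_opNorm_mul _ _).trans (mul_le_mul_of_nonneg_right ?_ (norm_nonneg _))
          refine (l2_opNorm_mul _ _).trans (mul_le_mul_of_nonneg_left ?_ (norm_nonneg _))
          exact (norm_add_le _ _).trans (add_le_add (l2_opNorm_mul _ _) (l2_opNorm_mul _ _))
      _ = ‖(1 + N)⁻¹‖ * ‖(1 + N)⁻¹‖ * (2 * ‖N‖ * ‖B‖ ^ 2) := by
          rw [l2_opNorm_transpose, hS]
          ring
      _ ≤ 2 * ‖N‖ * ‖B‖ ^ 2 :=
          mul_le_of_le_one_left (by positivity) (mul_le_one₀ hG (norm_nonneg _) hG)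
  rw [saddle_sub_transpose_eq hN]
  calc _ ≤ _ := l2_opNorm_fromBlocks_le _ _ _ _
    _ ≤ 2 * ‖N‖ * ‖B‖ ^ 2 + ‖N‖ * ‖B‖ + ‖N‖ * ‖B‖ + 0 := by
        rw [norm_neg, l2_opNorm_transpose, norm_zero]
        gcongr
    _ = 2 * ‖N‖ * (‖B‖ ^ 2 + ‖B‖) := by ring

end Matrix

theorem stmt_10_general
    {n m : ℕ} (F : Matrix (Fin n) (Fin n) ℝ) (B : Matrix (Fin m) (Fin n) ℝ)
    (H1 N : Matrix (Fin n) (Fin n) ℝ) (H2 : Matrix (Fin m) (Fin m) ℝ)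
    (η C₁ : ℝ)
    (hH1 : H1 = ((1 : ℝ)/2) • (F + Fᵀ)) (hN : N = ((1 : ℝ)/2) • (F - Fᵀ))
    (hH1pd : H1.PosDef) (hH2pd : H2.PosDef)
    (hNnorm : wnorm H1 H1⁻¹ N ≤ η)
    (hBnorm : wnorm H1 H2⁻¹ B ≤ C₁)
    (K MU H : Matrix (Fin n ⊕ Fin m) (Fin n ⊕ Fin m) ℝ)
    (hK : K = fromBlocks F Bᵀ B 0)
    (hMU : MU = fromBlocks F Bᵀ 0 H2)
    (hH : H = fromBlocks H1 0 0 H2) :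
    wnorm H H⁻¹ (H * (MU⁻¹ * K) - (MU⁻¹ * K)ᵀ * H) ≤ (2 * C₁ ^ 2 + 4 * C₁) * η := by
  obtain ⟨R₁, h₁⟩ := hH1pd.exists_isSymmSqrt
  obtain ⟨R₂, h₂⟩ := hH2pd.exists_isSymmSqrt
  have hR : IsSymmSqrt (fromBlocks R₁ 0 0 R₂) H := hH ▸ h₁.fromBlocks h₂
  rw [wnorm_eq_l2_opNorm h₁.transpose_mul_self h₁.isUnit_det h₁.inv_transpose_mul_inv] at hNnorm
  rw [wnorm_eq_l2_opNorm h₁.transpose_mul_self h₁.isUnit_det h₂.inv_transpose_mul_inv] at hBnorm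
  have hNskew : Nᵀ = -N := by
    rw [hN, transpose_smul, transpose_sub, transpose_transpose, ← smul_neg, neg_sub]
  have hF : F = H1 + N := by rw [hH1, hN]; module
  rw [wnorm_eq_l2_opNorm hR.transpose_mul_self hR.isUnit_det hR.inv_transpose_mul_inv,
    hR.inv_mul_sub_transpose_mul_mul_inv, mul_inv_mul_mul_inv hR.isUnit_det, hMU, hK, hF,
    h₁.inv_fromBlocks_mul_fromBlocks_mul_inv h₂, h₁.inv_fromBlocks_mul_fromBlocks_mul_inv h₂,
    h₂.inv_mul_mul_inv, Matrix.mul_zero, Matrix.zero_mul, Matrix.mul_zero, Matrix.zero_mul]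
  have hη : 0 ≤ η := (norm_nonneg _).trans hNnorm
  have hC₁ : 0 ≤ C₁ := (norm_nonneg _).trans hBnorm
  calc _ ≤ 2 * ‖R₁⁻¹ * N * R₁⁻¹‖ * (‖R₂⁻¹ * B * R₁⁻¹‖ ^ 2 + ‖R₂⁻¹ * B * R₁⁻¹‖) :=
        l2_opNorm_saddle_sub_transpose_le (transpose_mul_mul_eq_neg h₁.transpose_inv hNskew) _
    _ ≤ 2 * η * (C₁ ^ 2 + C₁) := by gcongr
    _ ≤ (2 * C₁ ^ 2 + 4 * C₁) * η := by nlinarith [mul_nonneg hC₁ hη]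

theorem stmt_10
    {n m : ℕ} (F : Matrix (Fin n) (Fin n) ℝ) (B : Matrix (Fin m) (Fin n) ℝ)
    (H1 N : Matrix (Fin n) (Fin n) ℝ) (H2 : Matrix (Fin m) (Fin m) ℝ)
    (η C₁ C₂ : ℝ) (hη : 0 < η) (hC1 : 0 < C₁) (hC2 : 0 < C₂)
    (hH1 : H1 = ((1 : ℝ)/2) • (F + Fᵀ)) (hN : N = ((1 : ℝ)/2) • (F - Fᵀ))
    (hH1pd : H1.PosDef) (hH2pd : H2.PosDef)
    (hBrank : B.rank = m)
    (hNnorm : wnorm H1 H1⁻¹ N ≤ η)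
    (hBnorm : wnorm H1 H2⁻¹ B ≤ C₁)
    (hinfsup : ∀ x : Fin m → ℝ, x ≠ 0 → C₂ * vnorm H2 x ≤ vnorm H1⁻¹ (Bᵀ *ᵥ x))
    (hsmall : η < 1/2)
    (K MU H : Matrix (Fin n ⊕ Fin m) (Fin n ⊕ Fin m) ℝ)
    (hK : K = fromBlocks F Bᵀ B 0)
    (hMU : MU = fromBlocks F Bᵀ 0 H2)
    (hH : H = fromBlocks H1 0 0 H2) :
    wnorm H H⁻¹ (H * (MU⁻¹ * K) - (MU⁻¹ * K)ᵀ * H) ≤ (2 * C₁ ^ 2 + 4 * C₁) * η :=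
  stmt_10_general F B H1 N H2 η C₁ hH1 hN hH1pd hH2pd hNnorm hBnorm K MU H hK hMU hH
end

section
/- For each n ≥ 1, let A₋₁(n) ∈ ℝ^{n×n} be the upper bidiagonal Toeplitz matrix with −1 on the main diagonal and 1/4 on the superdiagonal, let A₊₁(n) ∈ ℝ^{n×n} be the upper bidiagonal Toeplitz matrix with 2 on the main diagonal and 1.2 on the superdiagonal, and let A(n) = A₋₁(n) ⊕ A₊₁(n) be their block-diagonal direct sum (a 2n×2n matrix). Then A(n) is nonsingular for every n and ‖A(n)⁻¹‖₂⁻¹ → 3/4 as n → ∞. -/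
open Matrix

/-- The upper bidiagonal Toeplitz matrix with diagonal value d and superdiagonal value s. -/
noncomputable def bidiag (n : ℕ) (d s : ℝ) : Matrix (Fin n) (Fin n) ℝ :=
  Matrix.of fun i j => if (j : ℕ) = (i : ℕ) then d
    else if (j : ℕ) = (i : ℕ) + 1 then s else 0

/-- A(n) = A₋₁(n) ⊕ A₊₁(n). -/
noncomputable def Abig (n : ℕ) : Matrix (Fin n ⊕ Fin n) (Fin n ⊕ Fin n) ℝ :=
  fromBlocks (bidiag n (-1) (1/4)) 0 0 (bidiag n 2 (6/5))

/-! ### Auxiliary material -/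

namespace Stmt19Aux

/-- Shift of a vector: `(shiftv x) i = x (i+1)` (zero at the boundary). -/
noncomputable def shiftv (n : ℕ) (x : Fin n → ℝ) (i : Fin n) : ℝ :=
  if h : (i : ℕ) + 1 < n then x ⟨(i : ℕ) + 1, h⟩ else 0

lemma bidiag_mulVec (n : ℕ) (d s : ℝ) (x : Fin n → ℝ) (i : Fin n) :
    (bidiag n d s *ᵥ x) i = d * x i + s * shiftv n x i := by
  unfold bidiag shiftv
  simp only [mulVec, dotProduct, Matrix.of_apply]
  by_cases h : (i : ℕ) + 1 < n
  · have key : ∀ j : Fin n,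
        (if (j : ℕ) = (i : ℕ) then d else if (j : ℕ) = (i : ℕ) + 1 then s else 0) * x j
          = (if j = i then d * x j else 0)
            + (if j = (⟨(i : ℕ) + 1, h⟩ : Fin n) then s * x j else 0) := by
      intro j
      simp only [Fin.ext_iff]
      split_ifs <;> first | ring1 | (exfalso; omega)
    rw [Finset.sum_congr rfl (fun j _ => key j), Finset.sum_add_distrib,
      Finset.sum_ite_eq' Finset.univ i (fun j => d * x j),
      Finset.sum_ite_eq' Finset.univ (⟨(i : ℕ) + 1, h⟩ : Fin n) (fun j => s * x j)]
    simp [h]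
  · have key : ∀ j : Fin n,
        (if (j : ℕ) = (i : ℕ) then d else if (j : ℕ) = (i : ℕ) + 1 then s else 0) * x j
          = (if j = i then d * x j else 0) := by
      intro j
      have hj := j.isLt
      simp only [Fin.ext_iff]
      split_ifs <;> first | ring1 | (exfalso; omega)
    rw [Finset.sum_congr rfl (fun j _ => key j),
      Finset.sum_ite_eq' Finset.univ i (fun j => d * x j)]
    simp [h]

lemma sum_shiftv_sq_le (n : ℕ) (x : Fin n → ℝ) :
    ∑ i, (shiftv n x i) ^ 2 ≤ ∑ i, (x i) ^ 2 := by
  cases n with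
  | zero => simp
  | succ m =>
    rw [Fin.sum_univ_castSucc (f := fun i => (shiftv (m + 1) x i) ^ 2),
      Fin.sum_univ_succ (f := fun i => (x i) ^ 2)]
    have h1 : ∀ i : Fin m, shiftv (m + 1) x i.castSucc = x i.succ := by
      intro i
      have : ((i.castSucc : ℕ) + 1) < m + 1 := by
        simpa using i.isLt
      rw [shiftv, dif_pos this]
      congr 1
    have h2 : shiftv (m + 1) x (Fin.last m) = 0 := by
      rw [shiftv, dif_neg]
      simp
    rw [h2]
    simp only [h1]
    have := sq_nonneg (x 0)
    linarith

lemma quad_sum (n : ℕ) (d s c₁ c₂ : ℝ) (hc₂ : 0 ≤ c₂)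
    (h : ∀ a b : ℝ, c₁ * a ^ 2 - c₂ * b ^ 2 ≤ (d * a + s * b) ^ 2) (x : Fin n → ℝ) :
    (c₁ - c₂) * ∑ i, (x i) ^ 2 ≤ ∑ i, (d * x i + s * shiftv n x i) ^ 2 := by
  have h1 : ∑ i, (c₁ * (x i) ^ 2 - c₂ * (shiftv n x i) ^ 2)
      ≤ ∑ i, (d * x i + s * shiftv n x i) ^ 2 :=
    Finset.sum_le_sum fun i _ => h _ _
  rw [Finset.sum_sub_distrib, ← Finset.mul_sum, ← Finset.mul_sum] at h1
  have h2 := sum_shiftv_sq_le n x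
  nlinarith [h1, h2, hc₂]

lemma Abig_mulVec_inl (n : ℕ) (w : Fin n ⊕ Fin n → ℝ) (i : Fin n) :
    (Abig n *ᵥ w) (Sum.inl i)
      = (-1) * (w ∘ Sum.inl) i + (1/4) * shiftv n (w ∘ Sum.inl) i := by
  rw [Abig, Matrix.fromBlocks_mulVec]
  simp only [Sum.elim_inl, Pi.add_apply, Matrix.zero_mulVec, Pi.zero_apply, add_zero]
  exact bidiag_mulVec n (-1) (1/4) (w ∘ Sum.inl) i

lemma Abig_mulVec_inr (n : ℕ) (w : Fin n ⊕ Fin n → ℝ) (i : Fin n) :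
    (Abig n *ᵥ w) (Sum.inr i)
      = 2 * (w ∘ Sum.inr) i + (6/5) * shiftv n (w ∘ Sum.inr) i := by
  rw [Abig, Matrix.fromBlocks_mulVec]
  simp only [Sum.elim_inr, Pi.add_apply, Matrix.zero_mulVec, Pi.zero_apply, zero_add]
  exact bidiag_mulVec n 2 (6/5) (w ∘ Sum.inr) i

lemma dot_self_eq (n : ℕ) (u : Fin n ⊕ Fin n → ℝ) :
    u ⬝ᵥ u = (∑ i, (u (Sum.inl i)) ^ 2) + ∑ i, (u (Sum.inr i)) ^ 2 := by
  simp [dotProduct, Fintype.sum_sum_type, sq]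

lemma Abig_bound (n : ℕ) (w : Fin n ⊕ Fin n → ℝ) :
    (9/16) * (w ⬝ᵥ w) ≤ (Abig n *ᵥ w) ⬝ᵥ (Abig n *ᵥ w) := by
  rw [dot_self_eq, dot_self_eq]
  simp only [Abig_mulVec_inl, Abig_mulVec_inr]
  have hb1 : ((3:ℝ)/4 - 3/16) * ∑ i, ((w ∘ Sum.inl) i) ^ 2
      ≤ ∑ i, ((-1) * (w ∘ Sum.inl) i + (1/4) * shiftv n (w ∘ Sum.inl) i) ^ 2 := by
    apply quad_sum n (-1) (1/4) (3/4) (3/16) (by norm_num)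
    intro a b; nlinarith [sq_nonneg (a - b)]
  have hb2 : ((8:ℝ)/5 - 24/25) * ∑ i, ((w ∘ Sum.inr) i) ^ 2
      ≤ ∑ i, (2 * (w ∘ Sum.inr) i + (6/5) * shiftv n (w ∘ Sum.inr) i) ^ 2 := by
    apply quad_sum n 2 (6/5) (8/5) (24/25) (by norm_num)
    intro a b; nlinarith [sq_nonneg (a + b)]
  have hs1 : (0:ℝ) ≤ ∑ i, ((w ∘ Sum.inr) i) ^ 2 :=
    Finset.sum_nonneg fun i _ => sq_nonneg _
  simp only [Function.comp] at hb1 hb2 hs1 ⊢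
  linarith

lemma bidiag_det (n : ℕ) (d s : ℝ) : (bidiag n d s).det = d ^ n := by
  rw [Matrix.det_of_upperTriangular]
  · have : ∀ i : Fin n, bidiag n d s i i = d := by
      intro i; simp [bidiag]
    simp [this]
  · intro i j hji
    have : (j : ℕ) < (i : ℕ) := hji
    simp only [bidiag, Matrix.of_apply]
    rw [if_neg (by omega), if_neg (by omega)]

lemma Abig_det_isUnit (n : ℕ) : IsUnit (Abig n).det := by
  rw [Abig, Matrix.det_fromBlocks_zero₂₁, bidiag_det, bidiag_det]
  exact isUnit_iff_ne_zero.2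
    (mul_ne_zero (pow_ne_zero _ (by norm_num)) (pow_ne_zero _ (by norm_num)))

lemma dot_self_nonneg {α : Type*} [Fintype α] (v : α → ℝ) : 0 ≤ v ⬝ᵥ v :=
  Finset.sum_nonneg fun i _ => mul_self_nonneg _

lemma dot_self_pos {α : Type*} [Fintype α] {v : α → ℝ} (hv : v ≠ 0) : 0 < v ⬝ᵥ v := by
  obtain ⟨i, hi⟩ := Function.ne_iff.mp hv
  exact Finset.sum_pos' (fun j _ => mul_self_nonneg _)
    ⟨i, Finset.mem_univ i, mul_self_pos.2 hi⟩

lemma bounds (n : ℕ) (hn : 1 ≤ n) :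
    Real.sqrt (16 * n / (9 * n + 7)) ≤ wnorm 1 1 (Abig n)⁻¹ ∧
      wnorm 1 1 (Abig n)⁻¹ ≤ 4/3 := by
  set A := Abig n with hA
  set N := A⁻¹ with hN
  have hdet := Abig_det_isUnit n
  have hNA : N * A = 1 := Matrix.nonsing_inv_mul A hdet
  have hAN : A * N = 1 := Matrix.mul_nonsing_inv A hdet
  set S : Set ℝ := {r : ℝ | ∃ v : Fin n ⊕ Fin n → ℝ, v ≠ 0 ∧ r = vnorm 1 (N *ᵥ v) / vnorm 1 v}
    with hS
  have hwn : wnorm 1 1 N = sSup S := rfl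
  -- every element of S is ≤ 4/3
  have hmem_le : ∀ r ∈ S, r ≤ 4/3 := by
    rintro r ⟨v, hv, rfl⟩
    set w := N *ᵥ v with hw
    have hAw : A *ᵥ w = v := by
      rw [hw, Matrix.mulVec_mulVec, hAN, Matrix.one_mulVec]
    have hq : (9/16) * (w ⬝ᵥ w) ≤ v ⬝ᵥ v := by
      have := Abig_bound n w
      rwa [hAw] at this
    have hv2 : 0 < v ⬝ᵥ v := dot_self_pos hv
    have hw2 : 0 ≤ w ⬝ᵥ w := dot_self_nonneg w
    have hvn : vnorm 1 v = Real.sqrt (v ⬝ᵥ v) := by rw [vnorm, Matrix.one_mulVec]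
    have hwnv : vnorm 1 w = Real.sqrt (w ⬝ᵥ w) := by rw [vnorm, Matrix.one_mulVec]
    rw [hvn, hwnv]
    have hsv : 0 < Real.sqrt (v ⬝ᵥ v) := Real.sqrt_pos.2 hv2
    rw [div_le_iff₀ hsv]
    have h1 : Real.sqrt (w ⬝ᵥ w) ≤ Real.sqrt ((16/9) * (v ⬝ᵥ v)) :=
      Real.sqrt_le_sqrt (by linarith)
    have h2 : Real.sqrt ((16/9 : ℝ) * (v ⬝ᵥ v)) = (4/3) * Real.sqrt (v ⬝ᵥ v) := by
      rw [Real.sqrt_mul (by norm_num : (0:ℝ) ≤ 16/9)]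
      congr 1
      rw [show (16/9 : ℝ) = (4/3) ^ 2 by norm_num, Real.sqrt_sq (by norm_num)]
    linarith [h1, h2.symm ▸ h1]
  -- the distinguished element
  set w₀ : Fin n ⊕ Fin n → ℝ := Sum.elim (fun _ => 1) 0 with hw₀def
  set v₀ := A *ᵥ w₀ with hv₀def
  have hNv₀ : N *ᵥ v₀ = w₀ := by
    rw [hv₀def, Matrix.mulVec_mulVec, hNA, Matrix.one_mulVec]
  have hw₀ne : w₀ ≠ 0 := by
    intro h
    have := congrFun h (Sum.inl ⟨0, hn⟩)
    simp [hw₀def] at this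
  have hv₀ne : v₀ ≠ 0 := by
    intro h
    apply hw₀ne
    rw [← hNv₀, h, Matrix.mulVec_zero]
  have hw₀dot : w₀ ⬝ᵥ w₀ = (n : ℝ) := by
    simp [hw₀def, dotProduct, Fintype.sum_sum_type]
  have hv₀dot : v₀ ⬝ᵥ v₀ = (9 * n + 7) / 16 := by
    rw [dot_self_eq]
    have hr : ∀ i : Fin n, (v₀ (Sum.inr i)) ^ 2 = 0 := by
      intro i
      rw [hv₀def, Abig_mulVec_inr]
      have h1 : (w₀ ∘ Sum.inr) = (0 : Fin n → ℝ) := by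
        funext j; simp [hw₀def]
      rw [h1]
      simp [shiftv]
    have hl : ∀ i : Fin n, (v₀ (Sum.inl i)) ^ 2
        = 9/16 + (if i = (⟨n - 1, by omega⟩ : Fin n) then 7/16 else 0) := by
      intro i
      rw [hv₀def, Abig_mulVec_inl]
      have h1 : (w₀ ∘ Sum.inl) = (fun _ : Fin n => (1:ℝ)) := by
        funext j; simp [hw₀def]
      rw [h1]
      by_cases h : (i : ℕ) + 1 < n
      · rw [shiftv, dif_pos h, if_neg (by
          intro hcon
          have := congrArg Fin.val hcon
          simp at this
          omega)]
        norm_num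
      · rw [shiftv, dif_neg h, if_pos (by
          apply Fin.ext
          have := i.isLt
          simp
          omega)]
        norm_num
    rw [Finset.sum_congr rfl fun i _ => hl i, Finset.sum_congr rfl fun i _ => hr i,
      Finset.sum_add_distrib, Finset.sum_ite_eq' Finset.univ
        (⟨n - 1, by omega⟩ : Fin n) (fun _ => (7:ℝ)/16)]
    simp only [Finset.sum_const, Finset.card_univ, Fintype.card_fin, nsmul_eq_mul,
      Finset.mem_univ, if_true, Finset.sum_const_zero, add_zero]
    push_cast
    ring
  have hmem : Real.sqrt (16 * n / (9 * n + 7)) ∈ S := by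
    refine ⟨v₀, hv₀ne, ?_⟩
    rw [hNv₀]
    have h1 : vnorm 1 w₀ = Real.sqrt (w₀ ⬝ᵥ w₀) := by rw [vnorm, Matrix.one_mulVec]
    have h2 : vnorm 1 v₀ = Real.sqrt (v₀ ⬝ᵥ v₀) := by rw [vnorm, Matrix.one_mulVec]
    rw [h1, h2, hw₀dot, hv₀dot, ← Real.sqrt_div (by positivity)]
    congr 1
    rw [div_div_eq_mul_div]
    ring
  have hbdd : BddAbove S := ⟨4/3, fun r hr => hmem_le r hr⟩
  exact ⟨le_csSup hbdd hmem, csSup_le ⟨_, hmem⟩ hmem_le⟩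

end Stmt19Aux

open Stmt19Aux Filter in
theorem stmt_19 :
    (∀ n : ℕ, 1 ≤ n → IsUnit (Abig n).det) ∧
    Filter.Tendsto (fun n : ℕ => (wnorm 1 1 (Abig n)⁻¹)⁻¹)
      Filter.atTop (nhds (3/4)) := by
  constructor
  · intro n _; exact Abig_det_isUnit n
  · have hg : Tendsto (fun n : ℕ => Real.sqrt (16 * n / (9 * n + 7))) atTop
        (nhds (4/3)) := by
      have h0 : Tendsto (fun n : ℕ => (7:ℝ) / n) atTop (nhds 0) :=
        tendsto_const_div_atTop_nhds_zero_nat 7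
      have h9 : Tendsto (fun n : ℕ => (9:ℝ) + 7 / n) atTop (nhds 9) := by
        have := (tendsto_const_nhds (x := (9:ℝ)) (f := atTop (α := ℕ))).add h0
        simpa using this
      have h1 : Tendsto (fun n : ℕ => (16:ℝ) / (9 + 7 / n)) atTop (nhds (16/9)) := by
        exact (tendsto_const_nhds (x := (16:ℝ))).div h9 (by norm_num)
      have heq : (fun n : ℕ => (16:ℝ) / (9 + 7 / n)) =ᶠ[atTop]
          (fun n : ℕ => 16 * n / (9 * n + 7)) := by
        filter_upwards [eventually_ge_atTop 1] with n hn
        have hn0 : (n : ℝ) ≠ 0 := Nat.cast_ne_zero.2 (by omega)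
        field_simp
      have h2 : Tendsto (fun n : ℕ => 16 * (n:ℝ) / (9 * n + 7)) atTop (nhds (16/9)) :=
        h1.congr' heq
      have h3 := h2.sqrt
      have h4 : Real.sqrt (16/9) = 4/3 := by
        rw [show (16/9 : ℝ) = (4/3) ^ 2 by norm_num, Real.sqrt_sq (by norm_num)]
      rwa [h4] at h3
    have hmain : Tendsto (fun n : ℕ => wnorm 1 1 (Abig n)⁻¹) atTop (nhds (4/3)) := by
      apply tendsto_of_tendsto_of_tendsto_of_le_of_le' hg tendsto_const_nhds
      · filter_upwards [eventually_ge_atTop 1] with n hn using (bounds n hn).1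
      · filter_upwards [eventually_ge_atTop 1] with n hn using (bounds n hn).2
    have h := hmain.inv₀ (by norm_num)
    have h43 : ((4:ℝ)/3)⁻¹ = 3/4 := by norm_num
    rwa [h43] at h
end
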